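/- Let T be a null-cone bi-preserving rank-2 tensor with symmetric part S and antisymmetric part F (so (S×S) + (F×F) = f·g and (S×F)_{(ab)} = 0). Then every null eigenvector of S is a null eigenvector of F, and every eigenvector of F with nonzero eigenvalue is a null eigenvector of S. -/

import Mathlib

noncomputable section

/-- Minkowski signature factors: (+1, -1, ..., -1). -/
def eta {n : ℕ} (i : Fin (n + 1)) : ℝ := if i = 0 then 1 else -1

/-- The Minkowski (Lorentzian) inner product of signature (+,-,...,-). -/
def mink {n : ℕ} (u v : Fin (n + 1) → ℝ) : ℝ := ∑ i, eta i * u i * v i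

/-- A causal future-pointing vector. -/
def CausalFuture {n : ℕ} (u : Fin (n + 1) → ℝ) : Prop :=
  0 ≤ mink u u ∧ u ≠ 0 ∧ 0 < u 0

/-- A null future-pointing vector. -/
def NullFuture {n : ℕ} (u : Fin (n + 1) → ℝ) : Prop :=
  mink u u = 0 ∧ u ≠ 0 ∧ 0 < u 0

/-- A timelike future-pointing vector. -/
def TimelikeFuture {n : ℕ} (u : Fin (n + 1) → ℝ) : Prop :=
  0 < mink u u ∧ 0 < u 0

/-- The Lorentzian metric as a matrix (covariant components). -/
def gMat {n : ℕ} : Matrix (Fin (n + 1)) (Fin (n + 1)) ℝ := Matrix.diagonal eta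

/-- Contraction of a rank-2 covariant tensor with two vectors. -/
def quad {n : ℕ} (T : Matrix (Fin (n + 1)) (Fin (n + 1)) ℝ) (u v : Fin (n + 1) → ℝ) : ℝ :=
  ∑ a, ∑ b, u a * T a b * v b

/-- The dominant property for rank-2 tensors. -/
def DP2 {n : ℕ} (T : Matrix (Fin (n + 1)) (Fin (n + 1)) ℝ) : Prop :=
  ∀ u v, CausalFuture u → CausalFuture v → 0 ≤ quad T u v

/-- (T ₂×₂ T)_{ab} = T_{ac} T_b{}^c : contraction on the second index of each factor. -/
def sq2 {n : ℕ} (T : Matrix (Fin (n + 1)) (Fin (n + 1)) ℝ) :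
    Matrix (Fin (n + 1)) (Fin (n + 1)) ℝ :=
  Matrix.of fun a b => ∑ c, eta c * T a c * T b c

/-- (T ₁×₁ T)_{ab} = T_{ca} T^c{}_b : contraction on the first index of each factor. -/
def sq1 {n : ℕ} (T : Matrix (Fin (n + 1)) (Fin (n + 1)) ℝ) :
    Matrix (Fin (n + 1)) (Fin (n + 1)) ℝ :=
  Matrix.of fun a b => ∑ c, eta c * T c a * T c b

/-- The linear map v^a ↦ v^a T_a{}^b defined by a rank-2 tensor T. -/
def tmap {n : ℕ} (T : Matrix (Fin (n + 1)) (Fin (n + 1)) ℝ) (v : Fin (n + 1) → ℝ) :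
    Fin (n + 1) → ℝ := fun b => eta b * ∑ a, v a * T a b

/-- (A×B)_{ab} := A_{ca} B^c{}_b. -/
def xprod {n : ℕ} (A B : Matrix (Fin (n + 1)) (Fin (n + 1)) ℝ) :
    Matrix (Fin (n + 1)) (Fin (n + 1)) ℝ :=
  Matrix.of fun a b => ∑ c, eta c * A c a * B c b

/-- The dominant property for rank-r covariant tensors. -/
def DP {n r : ℕ} (T : MultilinearMap ℝ (fun _ : Fin r => (Fin (n + 1) → ℝ)) ℝ) : Prop :=
  ∀ u : Fin r → (Fin (n + 1) → ℝ), (∀ i, CausalFuture (u i)) → 0 ≤ T u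

/-- k is an eigenvector of the rank-2 tensor A with eigenvalue lam:
k^a A_a{}^b = lam k^b. -/
def eig {n : ℕ} (A : Matrix (Fin (n + 1)) (Fin (n + 1)) ℝ) (k : Fin (n + 1) → ℝ)
    (lam : ℝ) : Prop :=
  ∀ b, eta b * ∑ a, k a * A a b = lam * k b

/-!
In terms of the mixed tensors `P = S g` and `Q = F g`, the two quadratic conditions on
`T = S + F` become `P² - Q² = f` and `PQ = QP`. If `k` is a null eigenvector of `P`, then `kQ`
is orthogonal to `k` (as `F` is antisymmetric) and null (as `kQ² = (λ² - f) k`). If `kQ = μ k`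
with `μ ≠ 0`, antisymmetry forces `k` to be null, and `kP` is null (as `kP² = (μ² + f) k`) and
orthogonal to `k` (both are `μ`-eigenvectors of `Q`). In Lorentzian signature two orthogonal
null vectors are proportional, which gives the eigenvectors.
-/

open Matrix

lemma mul_sub_mul_eq_and_commute_of_add_mul_sub {R : Type*} [Ring R] [Module ℝ R]
    {S F G X : R} (hp : (S + F) * G * (S - F) = X) (hm : (S - F) * G * (S + F) = X) :
    S * G * S - F * G * F = X ∧ S * G * F = F * G * S := by
  have hsum : (2 : ℝ) • (S * G * S - F * G * F) = (2 : ℝ) • X := by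
    calc (2 : ℝ) • (S * G * S - F * G * F)
        = (S + F) * G * (S - F) + (S - F) * G * (S + F) := by rw [two_smul]; noncomm_ring
      _ = (2 : ℝ) • X := by rw [hp, hm, two_smul]
  have hdiff : (2 : ℝ) • (S * G * F) = (2 : ℝ) • (F * G * S) := by
    calc (2 : ℝ) • (S * G * F)
        = (2 : ℝ) • (F * G * S) + ((S - F) * G * (S + F) - (S + F) * G * (S - F)) := by
          rw [two_smul, two_smul]; noncomm_ring
      _ = (2 : ℝ) • (F * G * S) := by rw [hp, hm, sub_self, add_zero]
  exact ⟨smul_right_injective R two_ne_zero hsum, smul_right_injective R two_ne_zero hdiff⟩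

section Lorentz

variable {n : ℕ}

lemma eta_mul_self (i : Fin (n + 1)) : eta i * eta i = 1 := by
  unfold eta; split_ifs <;> norm_num

lemma gMat_mul_self : (gMat : Matrix (Fin (n + 1)) (Fin (n + 1)) ℝ) * gMat = 1 := by
  rw [gMat, diagonal_mul_diagonal, funext eta_mul_self, diagonal_one]

lemma mink_comm (u v : Fin (n + 1) → ℝ) : mink u v = mink v u := by
  unfold mink; congr 1; ext i; ring

lemma mink_smul_left (c : ℝ) (u v : Fin (n + 1) → ℝ) : mink (c • u) v = c * mink u v := by
  simp only [mink, Finset.mul_sum, Pi.smul_apply, smul_eq_mul]; congr 1; ext i; ring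

lemma mink_smul_right (c : ℝ) (u v : Fin (n + 1) → ℝ) : mink u (c • v) = c * mink u v := by
  rw [mink_comm, mink_smul_left, mink_comm]

lemma eq_zero_of_apply_zero_of_mink_self_eq_zero {k : Fin (n + 1) → ℝ} (h0 : k 0 = 0)
    (hk : mink k k = 0) : k = 0 := by
  have hterm : ∀ i ∈ Finset.univ, eta i * k i * k i ≤ 0 := by
    intro i _
    by_cases hi : i = 0
    · simp [hi, h0]
    · simp only [eta, if_neg hi]; nlinarith [sq_nonneg (k i)]
  have hzero := (Finset.sum_eq_zero_iff_of_nonpos hterm).mp hk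
  ext i
  by_cases hi : i = 0
  · simpa [hi] using h0
  · have := hzero i (Finset.mem_univ i)
    simp only [eta, if_neg hi] at this
    simpa using this

lemma exists_eq_smul_of_mink_eq_zero {k m : Fin (n + 1) → ℝ} (hk0 : k ≠ 0)
    (hk : mink k k = 0) (hm : mink m m = 0) (hmk : mink m k = 0) : ∃ c : ℝ, m = c • k := by
  have hk00 : k 0 ≠ 0 := fun h => hk0 (eq_zero_of_apply_zero_of_mink_self_eq_zero h hk)
  -- `w` has vanishing time component and is null, hence vanishes.
  set w := k 0 • m - m 0 • k with hw
  have hww :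
      mink w w = k 0 ^ 2 * mink m m - 2 * k 0 * m 0 * mink m k + m 0 ^ 2 * mink k k := by
    simp only [mink, hw, Finset.mul_sum, ← Finset.sum_sub_distrib, ← Finset.sum_add_distrib,
      Pi.sub_apply, Pi.smul_apply, smul_eq_mul]
    congr 1; ext i; ring
  rw [hk, hm, hmk] at hww
  have hw0 : w = 0 :=
    eq_zero_of_apply_zero_of_mink_self_eq_zero (by simp [hw]; ring) (by rw [hww]; ring)
  refine ⟨m 0 / k 0, funext fun i => ?_⟩
  have hi := congrFun hw0 i
  simp only [hw, Pi.sub_apply, Pi.smul_apply, smul_eq_mul, Pi.zero_apply] at hi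
  simp only [Pi.smul_apply, smul_eq_mul]
  field_simp
  linarith

lemma eig_iff_tmap (A : Matrix (Fin (n + 1)) (Fin (n + 1)) ℝ) (k : Fin (n + 1) → ℝ) (lam : ℝ) :
    eig A k lam ↔ tmap A k = lam • k :=
  funext_iff.symm

lemma tmap_eq_vecMul (A : Matrix (Fin (n + 1)) (Fin (n + 1)) ℝ) (v : Fin (n + 1) → ℝ) :
    tmap A v = v ᵥ* (A * gMat) := by
  ext b
  simp only [tmap, gMat, mul_diagonal, vecMul, dotProduct, Finset.mul_sum]
  congr 1; ext a; ring

lemma tmap_smul (A : Matrix (Fin (n + 1)) (Fin (n + 1)) ℝ) (c : ℝ) (v : Fin (n + 1) → ℝ) :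
    tmap A (c • v) = c • tmap A v := by
  simp only [tmap_eq_vecMul, smul_vecMul]

lemma tmap_tmap (A B : Matrix (Fin (n + 1)) (Fin (n + 1)) ℝ) (v : Fin (n + 1) → ℝ) :
    tmap B (tmap A v) = tmap (A * gMat * B) v := by
  simp only [tmap_eq_vecMul, vecMul_vecMul, Matrix.mul_assoc]

lemma tmap_sub (A B : Matrix (Fin (n + 1)) (Fin (n + 1)) ℝ) (v : Fin (n + 1) → ℝ) :
    tmap (A - B) v = tmap A v - tmap B v := by
  simp only [tmap_eq_vecMul, Matrix.sub_mul, vecMul_sub]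

lemma tmap_smul_gMat (c : ℝ) (v : Fin (n + 1) → ℝ) : tmap (c • gMat) v = c • v := by
  rw [tmap_eq_vecMul, Matrix.smul_mul, gMat_mul_self, vecMul_smul, vecMul_one]

lemma mink_tmap_left (A : Matrix (Fin (n + 1)) (Fin (n + 1)) ℝ) (u v : Fin (n + 1) → ℝ) :
    mink (tmap A u) v = quad A u v := by
  simp only [mink, tmap, quad, Finset.mul_sum, Finset.sum_mul]
  rw [Finset.sum_comm]
  refine Finset.sum_congr rfl fun a _ => Finset.sum_congr rfl fun b _ => ?_
  linear_combination u a * A a b * v b * eta_mul_self b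

lemma quad_transpose (A : Matrix (Fin (n + 1)) (Fin (n + 1)) ℝ) (u v : Fin (n + 1) → ℝ) :
    quad Aᵀ u v = quad A v u := by
  simp only [quad, transpose_apply]
  rw [Finset.sum_comm]
  refine Finset.sum_congr rfl fun a _ => Finset.sum_congr rfl fun b _ => ?_
  ring

lemma mink_tmap_transpose (A : Matrix (Fin (n + 1)) (Fin (n + 1)) ℝ) (u v : Fin (n + 1) → ℝ) :
    mink (tmap A u) v = mink u (tmap Aᵀ v) := by
  rw [mink_comm u, mink_tmap_left, mink_tmap_left, quad_transpose]

lemma mink_tmap_of_transpose_eq_neg {F : Matrix (Fin (n + 1)) (Fin (n + 1)) ℝ} (hF : Fᵀ = -F)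
    (u v : Fin (n + 1) → ℝ) : mink (tmap F u) v = -mink u (tmap F v) := by
  rw [mink_tmap_transpose, hF]
  simp only [mink, tmap, Matrix.neg_apply, mul_neg, Finset.sum_neg_distrib]

lemma mink_tmap_self_of_transpose_eq_neg {F : Matrix (Fin (n + 1)) (Fin (n + 1)) ℝ}
    (hF : Fᵀ = -F) (u : Fin (n + 1) → ℝ) : mink (tmap F u) u = 0 := by
  linarith [mink_tmap_of_transpose_eq_neg hF u u, mink_comm (tmap F u) u]

lemma sq2_eq_mul (T : Matrix (Fin (n + 1)) (Fin (n + 1)) ℝ) : sq2 T = T * gMat * Tᵀ := by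
  ext a b
  rw [gMat, mul_apply]
  simp only [sq2, of_apply, mul_diagonal, transpose_apply]
  congr 1; ext c; ring

lemma sq1_eq_mul (T : Matrix (Fin (n + 1)) (Fin (n + 1)) ℝ) : sq1 T = Tᵀ * gMat * T := by
  ext a b
  rw [gMat, mul_apply]
  simp only [sq1, of_apply, mul_diagonal, transpose_apply]
  congr 1; ext c; ring

variable {S F : Matrix (Fin (n + 1)) (Fin (n + 1)) ℝ} {f : ℝ} {k : Fin (n + 1) → ℝ}

lemma tmap_tmap_sub_tmap_tmap (hsq : S * gMat * S - F * gMat * F = f • gMat)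
    (v : Fin (n + 1) → ℝ) : tmap S (tmap S v) - tmap F (tmap F v) = f • v := by
  rw [tmap_tmap, tmap_tmap, ← tmap_sub, hsq, tmap_smul_gMat]

theorem exists_eig_of_null_eig (hF : Fᵀ = -F) (hsq : S * gMat * S - F * gMat * F = f • gMat)
    {lam : ℝ} (hk0 : k ≠ 0) (hk : mink k k = 0) (hkS : eig S k lam) : ∃ mu : ℝ, eig F k mu := by
  rw [eig_iff_tmap] at hkS
  have hFF : tmap F (tmap F k) = (lam * lam - f) • k := by
    rw [sub_smul, ← tmap_tmap_sub_tmap_tmap hsq k, hkS, tmap_smul, hkS, smul_smul]; abel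
  have hmm : mink (tmap F k) (tmap F k) = 0 := by
    rw [mink_tmap_of_transpose_eq_neg hF, hFF, mink_smul_right, hk, mul_zero, neg_zero]
  obtain ⟨mu, hmu⟩ :=
    exists_eq_smul_of_mink_eq_zero hk0 hk hmm (mink_tmap_self_of_transpose_eq_neg hF k)
  exact ⟨mu, (eig_iff_tmap F k mu).mpr hmu⟩

theorem null_and_exists_eig_of_eig (hS : Sᵀ = S) (hF : Fᵀ = -F)
    (hsq : S * gMat * S - F * gMat * F = f • gMat) (hcomm : S * gMat * F = F * gMat * S)
    {mu : ℝ} (hk0 : k ≠ 0) (hmu : mu ≠ 0) (hkF : eig F k mu) :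
    mink k k = 0 ∧ ∃ lam : ℝ, eig S k lam := by
  rw [eig_iff_tmap] at hkF
  have hk : mink k k = 0 := by
    have h := mink_tmap_self_of_transpose_eq_neg hF k
    rw [hkF, mink_smul_left] at h
    exact (mul_eq_zero.mp h).resolve_left hmu
  have hSS : tmap S (tmap S k) = (mu * mu + f) • k := by
    rw [add_smul, ← tmap_tmap_sub_tmap_tmap hsq k, hkF, tmap_smul, hkF, smul_smul]; abel
  have hpp : mink (tmap S k) (tmap S k) = 0 := by
    rw [mink_tmap_transpose, hS, hSS, mink_smul_right, hk, mul_zero]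
  -- `tmap S k` and `k` are eigenvectors of the antisymmetric `F` with the same nonzero
  -- eigenvalue, hence orthogonal.
  have hFp : tmap F (tmap S k) = mu • tmap S k := by
    rw [tmap_tmap, hcomm, ← tmap_tmap, hkF, tmap_smul]
  have hpk : mink (tmap S k) k = 0 := by
    have h := mink_tmap_of_transpose_eq_neg hF (tmap S k) k
    rw [hFp, hkF, mink_smul_left, mink_smul_right] at h
    exact (mul_eq_zero.mp (by linarith : mu * mink (tmap S k) k = 0)).resolve_left hmu
  obtain ⟨lam, hlam⟩ := exists_eq_smul_of_mink_eq_zero hk0 hk hpp hpk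
  exact ⟨hk, lam, (eig_iff_tmap S k lam).mpr hlam⟩

end Lorentz

/-- for a null-cone bi-preserving T = S + F, every null eigenvector
of S is a null eigenvector of F, and every eigenvector of F with nonzero eigenvalue
is a null eigenvector of S. -/
theorem stmt18 {n : ℕ} (T S F : Matrix (Fin (n + 1)) (Fin (n + 1)) ℝ) (f : ℝ)
    (hS : ∀ a b, S a b = (T a b + T b a) / 2)
    (hF : ∀ a b, F a b = (T a b - T b a) / 2)
    (h2 : sq2 T = f • gMat) (h1 : sq1 T = f • gMat) :
    (∀ (k : Fin (n + 1) → ℝ) (lam : ℝ), k ≠ 0 → mink k k = 0 → eig S k lam →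
      ∃ mu : ℝ, eig F k mu) ∧
    (∀ (k : Fin (n + 1) → ℝ) (mu : ℝ), k ≠ 0 → mu ≠ 0 → eig F k mu →
      mink k k = 0 ∧ ∃ lam : ℝ, eig S k lam) := by
  have hT : T = S + F := by ext a b; simp only [Matrix.add_apply, hS, hF]; ring
  have hTt : Tᵀ = S - F := by
    ext a b; simp only [transpose_apply, Matrix.sub_apply, hS, hF]; ring
  have hSt : Sᵀ = S := by ext a b; simp only [transpose_apply, hS]; ring
  have hFt : Fᵀ = -F := by ext a b; simp only [transpose_apply, Matrix.neg_apply, hF]; ring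
  obtain ⟨hsq, hcomm⟩ := mul_sub_mul_eq_and_commute_of_add_mul_sub
    (by rw [← hT, ← hTt, ← sq2_eq_mul, h2]) (by rw [← hT, ← hTt, ← sq1_eq_mul, h1])
  exact ⟨fun k _ hk0 hk hkS => exists_eig_of_null_eig hFt hsq hk0 hk hkS,
    fun k _ hk0 hmu hkF => null_and_exists_eig_of_eig hSt hFt hsq hcomm hk0 hmu hkF⟩
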